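/- arXiv:1604.00993 — 10 statements merged into one kernel-verified Lean document; each statement's English description precedes it below -/
import Mathlib

section
/- For all real numbers x, y, z: x^4+y^4+z^4 + a(x^3y+y^3z+z^3x+xy^3+yz^3+zx^3) + (a^2-1)(x^2y^2+y^2z^2+z^2x^2) - (a^2+2a)·xyz(x+y+z) = u^2 + v^2 - uv, where u = (x-y)(x+y+az) and v = (x-z)(x+z+ay), for any real constant a. In particular this expression is nonnegative. -/
theorem stmt_0 (a x y z : ℝ) :
    (x^4+y^4+z^4) + a*(x^3*y+y^3*z+z^3*x+x*y^3+y*z^3+z*x^3) + (a^2-1)*(x^2*y^2+y^2*z^2+z^2*x^2) - (a^2+2*a)*(x*y*z*(x+y+z)) =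
      ((x-y)*(x+y+a*z))^2 + ((x-z)*(x+z+a*y))^2 - ((x-y)*(x+y+a*z))*((x-z)*(x+z+a*y)) ∧
    0 ≤ (x^4+y^4+z^4) + a*(x^3*y+y^3*z+z^3*x+x*y^3+y*z^3+z*x^3) + (a^2-1)*(x^2*y^2+y^2*z^2+z^2*x^2) - (a^2+2*a)*(x*y*z*(x+y+z)) := by
  have h : (x^4+y^4+z^4) + a*(x^3*y+y^3*z+z^3*x+x*y^3+y*z^3+z*x^3) + (a^2-1)*(x^2*y^2+y^2*z^2+z^2*x^2) - (a^2+2*a)*(x*y*z*(x+y+z)) =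
      ((x-y)*(x+y+a*z))^2 + ((x-z)*(x+z+a*y))^2 - ((x-y)*(x+y+a*z))*((x-z)*(x+z+a*y)) := by ring
  refine ⟨h, h ▸ ?_⟩
  nlinarith [sq_nonneg ((x-y)*(x+y+a*z) - (x-z)*(x+z+a*y)), sq_nonneg ((x-y)*(x+y+a*z) + (x-z)*(x+z+a*y))]
end

section
/- Let a, b, c be real constants with c ≤ -a^2-2a and b ≥ -2a-c-1. Then for all real x, y, z: x^4+y^4+z^4 + a(x^3y+y^3z+z^3x+xy^3+yz^3+zx^3) + b(x^2y^2+y^2z^2+z^2x^2) + c·xyz(x+y+z) ≥ 0. -/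
theorem stmt_3 (a b c : ℝ) (hc : c ≤ -a^2 - 2*a) (hb : b ≥ -2*a - c - 1)
    (x y z : ℝ) :
    0 ≤ (x^4+y^4+z^4) + a*(x^3*y+y^3*z+z^3*x+x*y^3+y*z^3+z*x^3) + b*(x^2*y^2+y^2*z^2+z^2*x^2) + c*(x*y*z*(x+y+z)) := by
  set u := (x-y)*(x+y+a*z) with hu
  set v := (x-z)*(x+z+a*y) with hv
  have hq : 0 ≤ u^2 + v^2 - u*v := by nlinarith [sq_nonneg (u-v), sq_nonneg u, sq_nonneg v]
  have hw2 : (0:ℝ) ≤ x^2*y^2+y^2*z^2+z^2*x^2 := by positivity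
  have hw21 : x*y*z*(x+y+z) ≤ x^2*y^2+y^2*z^2+z^2*x^2 := by
    nlinarith [sq_nonneg (x*y - y*z), sq_nonneg (y*z - z*x), sq_nonneg (z*x - x*y)]
  have h1 : 0 ≤ (b + c + 2*a + 1) * (x^2*y^2+y^2*z^2+z^2*x^2) := by
    apply mul_nonneg _ hw2; linarith
  have h2 : 0 ≤ (-c - a^2 - 2*a) * ((x^2*y^2+y^2*z^2+z^2*x^2) - x*y*z*(x+y+z)) := by
    apply mul_nonneg <;> linarith
  have hid : (x^4+y^4+z^4) + a*(x^3*y+y^3*z+z^3*x+x*y^3+y*z^3+z*x^3) + b*(x^2*y^2+y^2*z^2+z^2*x^2) + c*(x*y*z*(x+y+z)) = (u^2+v^2-u*v) + (b+c+2*a+1)*(x^2*y^2+y^2*z^2+z^2*x^2) + (-c-a^2-2*a)*((x^2*y^2+y^2*z^2+z^2*x^2) - x*y*z*(x+y+z)) := by rw [hu, hv]; ring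
  linarith [hq, h1, h2]
end

section
/- Let b, c be real. The inequality x^4+y^4+z^4 - (1/2)(x^3y+y^3z+z^3x+xy^3+yz^3+zx^3) + b(x^2y^2+y^2z^2+z^2x^2) + c·xyz(x+y+z) ≥ 0 holds for all real x, y, z if and only if b ≥ max(-c, c/2 - 9/8). -/
lemma keyF (x y z : ℝ) :
    0 ≤ (x^4+y^4+z^4) - (1/2)*(x^3*y+y^3*z+z^3*x+x*y^3+y*z^3+z*x^3)
      - (3/4)*(x^2*y^2+y^2*z^2+z^2*x^2) + (3/4)*(x*y*z*(x+y+z)) := by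
  nlinarith [sq_nonneg ((x-y)*(x+y-z/2)), sq_nonneg ((y-z)*(y+z-x/2)),
    sq_nonneg ((z-x)*(z+x-y/2))]

theorem stmt_5 (b c : ℝ) :
    (∀ x y z : ℝ, 0 ≤ (x^4+y^4+z^4) - (1/2)*(x^3*y+y^3*z+z^3*x+x*y^3+y*z^3+z*x^3) + b*(x^2*y^2+y^2*z^2+z^2*x^2) + c*(x*y*z*(x+y+z))) ↔ b ≥ max (-c) (c/2 - 9/8) := by
  constructor
  · intro h
    refine max_le ?_ ?_
    · have := h 1 1 1; nlinarith
    · have := h 2 2 (-1); nlinarith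
  · intro h x y z
    have hb1 : -c ≤ b := le_trans (le_max_left _ _) h
    have hb2 : c/2 - 9/8 ≤ b := le_trans (le_max_right _ _) h
    have hP : (0:ℝ) ≤ x^2*y^2+y^2*z^2+z^2*x^2 := by positivity
    have hF := keyF x y z
    rcases le_total c (3/4) with hc | hc
    · -- E = F + (b+c)P + (3/4-c)(P-T)
      have hQ : (0:ℝ) ≤ (x^2*y^2+y^2*z^2+z^2*x^2) - x*y*z*(x+y+z) := by
        nlinarith [sq_nonneg (x*y-y*z), sq_nonneg (y*z-z*x), sq_nonneg (z*x-x*y)]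
      have h1 : 0 ≤ (b+c) * (x^2*y^2+y^2*z^2+z^2*x^2) :=
        mul_nonneg (by linarith) hP
      have h2 : 0 ≤ (3/4-c) * ((x^2*y^2+y^2*z^2+z^2*x^2) - x*y*z*(x+y+z)) :=
        mul_nonneg (by linarith) hQ
      nlinarith [h1, h2, hF]
    · -- E = F + (b-c/2+9/8)P + (c-3/4)·½(xy+yz+zx)²
      have h1 : 0 ≤ (b - c/2 + 9/8) * (x^2*y^2+y^2*z^2+z^2*x^2) :=
        mul_nonneg (by linarith) hP
      have h2 : 0 ≤ (c - 3/4) * (x*y+y*z+z*x)^2 :=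
        mul_nonneg (by linarith) (sq_nonneg _)
      nlinarith [h1, h2, hF]
end

section
/- Let a ≠ -1/2 and t ≠ -1/2 be real numbers with t ≠ 1. Define p = -(t^2+t+1)/(2t+1), q = (t^2+2t)/(2t+1), k = (2t^2+2t(a+1)+a+2)/(t-1), b(t) = -(t^4+(a+4)t^3+(5a+4)t^2+4(a+1)t+2a+2)/(2t+1), c(t) = (2t^4+2(a+1)t^3+(2a+4)t^2+(3a+4)t-a)/(2t+1). Then for all real x, y, z: w_4 + a·w_3 + b(t)·w_2 + c(t)·w_1 = X^2+Y^2+Z^2 + k(XY+YZ+ZX), where X = x^2+pxy+pxz+qyz, Y = y^2+pyz+pyx+qzx, Z = z^2+pzx+pzy+qxy. -/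
/-!
The quadratic form `X² + Y² + Z² + k(XY + YZ + ZX)` in `X, Y, Z` is a symmetric quartic in
`x, y, z`, so it is a combination of `w₄, w₃, w₂, w₁` whose coefficients are polynomials in
`p, q, k`. For the given `p, q, k` these coefficients are `1, a, b(t), c(t)`; in particular
`a = 2p + k(p + q)` is what forces the value of `k`, since `p + q = (t - 1)/(2t + 1)`.
-/

theorem sq_add_sq_add_sq_add_mul_cyclic_eq {R : Type*} [CommRing R] (p q k x y z : R) :
    (x^2+p*x*y+p*x*z+q*y*z)^2 + (y^2+p*y*z+p*y*x+q*z*x)^2 + (z^2+p*z*x+p*z*y+q*x*y)^2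
      + k*((x^2+p*x*y+p*x*z+q*y*z)*(y^2+p*y*z+p*y*x+q*z*x)
         + (y^2+p*y*z+p*y*x+q*z*x)*(z^2+p*z*x+p*z*y+q*x*y)
         + (z^2+p*z*x+p*z*y+q*x*y)*(x^2+p*x*y+p*x*z+q*y*z)) =
    (x^4+y^4+z^4) + (2*p + k*(p+q))*(x^3*y+y^3*z+z^3*x+x*y^3+y*z^3+z*x^3)
      + (2*p^2 + q^2 + k*(1 + p^2 + 2*p*q))*(x^2*y^2+y^2*z^2+z^2*x^2)
      + (2*p^2 + 4*p*q + 2*q + k*(3*p^2 + 2*p*q + q^2 + 2*p))*(x*y*z*(x+y+z)) := by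
  ring

section Coefficients

variable {a t : ℝ}

theorem coeff_w₃_eq (ht : 2*t+1 ≠ 0) (ht1 : t - 1 ≠ 0) :
    2*(-(t^2+t+1)/(2*t+1)) + (2*t^2+2*t*(a+1)+a+2)/(t-1)
      * (-(t^2+t+1)/(2*t+1) + (t^2+2*t)/(2*t+1)) = a := by
  field_simp
  ring

theorem coeff_w₂_eq (ht : 2*t+1 ≠ 0) (ht1 : t - 1 ≠ 0) :
    2*(-(t^2+t+1)/(2*t+1))^2 + ((t^2+2*t)/(2*t+1))^2
      + (2*t^2+2*t*(a+1)+a+2)/(t-1)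
        * (1 + (-(t^2+t+1)/(2*t+1))^2 + 2*(-(t^2+t+1)/(2*t+1))*((t^2+2*t)/(2*t+1)))
      = -(t^4+(a+4)*t^3+(5*a+4)*t^2+4*(a+1)*t+2*a+2)/(2*t+1) := by
  field_simp
  ring

theorem coeff_w₁_eq (ht : 2*t+1 ≠ 0) (ht1 : t - 1 ≠ 0) :
    2*(-(t^2+t+1)/(2*t+1))^2 + 4*(-(t^2+t+1)/(2*t+1))*((t^2+2*t)/(2*t+1))
      + 2*((t^2+2*t)/(2*t+1))
      + (2*t^2+2*t*(a+1)+a+2)/(t-1)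
        * (3*(-(t^2+t+1)/(2*t+1))^2 + 2*(-(t^2+t+1)/(2*t+1))*((t^2+2*t)/(2*t+1))
          + ((t^2+2*t)/(2*t+1))^2 + 2*(-(t^2+t+1)/(2*t+1)))
      = (2*t^4+2*(a+1)*t^3+(2*a+4)*t^2+(3*a+4)*t-a)/(2*t+1) := by
  field_simp
  ring

end Coefficients

theorem stmt_7_general (a t : ℝ) (ht : t ≠ -1/2) (ht1 : t ≠ 1)
    (p q k bt ct : ℝ)
    (hp : p = -(t^2+t+1)/(2*t+1)) (hq : q = (t^2+2*t)/(2*t+1))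
    (hk : k = (2*t^2+2*t*(a+1)+a+2)/(t-1))
    (hbt : bt = -(t^4+(a+4)*t^3+(5*a+4)*t^2+4*(a+1)*t+2*a+2)/(2*t+1))
    (hct : ct = (2*t^4+2*(a+1)*t^3+(2*a+4)*t^2+(3*a+4)*t-a)/(2*t+1))
    (x y z : ℝ) :
    (x^4+y^4+z^4) + a*(x^3*y+y^3*z+z^3*x+x*y^3+y*z^3+z*x^3) + bt*(x^2*y^2+y^2*z^2+z^2*x^2) + ct*(x*y*z*(x+y+z)) =
      (x^2+p*x*y+p*x*z+q*y*z)^2 + (y^2+p*y*z+p*y*x+q*z*x)^2 + (z^2+p*z*x+p*z*y+q*x*y)^2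
      + k*((x^2+p*x*y+p*x*z+q*y*z)*(y^2+p*y*z+p*y*x+q*z*x)
         + (y^2+p*y*z+p*y*x+q*z*x)*(z^2+p*z*x+p*z*y+q*x*y)
         + (z^2+p*z*x+p*z*y+q*x*y)*(x^2+p*x*y+p*x*z+q*y*z)) := by
  have h2t : 2*t+1 ≠ 0 := fun h => ht (by linarith)
  have ht1' : t - 1 ≠ 0 := sub_ne_zero.mpr ht1
  rw [sq_add_sq_add_sq_add_mul_cyclic_eq]
  subst hp hq hk hbt hct
  rw [coeff_w₃_eq h2t ht1', coeff_w₂_eq h2t ht1', coeff_w₁_eq h2t ht1']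

theorem stmt_7 (a t : ℝ) (ha : a ≠ -1/2) (ht : t ≠ -1/2) (ht1 : t ≠ 1)
    (p q k bt ct : ℝ)
    (hp : p = -(t^2+t+1)/(2*t+1)) (hq : q = (t^2+2*t)/(2*t+1))
    (hk : k = (2*t^2+2*t*(a+1)+a+2)/(t-1))
    (hbt : bt = -(t^4+(a+4)*t^3+(5*a+4)*t^2+4*(a+1)*t+2*a+2)/(2*t+1))
    (hct : ct = (2*t^4+2*(a+1)*t^3+(2*a+4)*t^2+(3*a+4)*t-a)/(2*t+1))
    (x y z : ℝ) :
    (x^4+y^4+z^4) + a*(x^3*y+y^3*z+z^3*x+x*y^3+y*z^3+z*x^3) + bt*(x^2*y^2+y^2*z^2+z^2*x^2) + ct*(x*y*z*(x+y+z)) =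
      (x^2+p*x*y+p*x*z+q*y*z)^2 + (y^2+p*y*z+p*y*x+q*z*x)^2 + (z^2+p*z*x+p*z*y+q*x*y)^2
      + k*((x^2+p*x*y+p*x*z+q*y*z)*(y^2+p*y*z+p*y*x+q*z*x)
         + (y^2+p*y*z+p*y*x+q*z*x)*(z^2+p*z*x+p*z*y+q*x*y)
         + (z^2+p*z*x+p*z*y+q*x*y)*(x^2+p*x*y+p*x*z+q*y*z)) :=
  stmt_7_general a t ht ht1 p q k bt ct hp hq hk hbt hct x y z
end

section
/- Let -1/2 < a ≤ 4 and t ∈ [-a-1, -1/2). Define b(t) = -(t^4+(a+4)t^3+(5a+4)t^2+4(a+1)t+2a+2)/(2t+1) and c(t) = (2t^4+2(a+1)t^3+(2a+4)t^2+(3a+4)t-a)/(2t+1). Then for every real b, the inequality w_4 + a·w_3 + b·w_2 + c(t)·w_1 ≥ 0 holds for all real x, y, z if and only if b ≥ b(t). -/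
/-!
The form is affine in `b` with coefficient `w_2`, which is nonnegative and equals `2t² + 1 > 0`
at `(t, 1, 1)`. So it suffices that at `b = b(t)` the form is nonnegative and vanishes at
`(t, 1, 1)`. Nonnegativity of that form `F` (with `c = c(t)`) comes from the certificate
`6(1-t)(2t+1)² F = α Σ ((y-z)(y+z-(t+1)x))² + β ((2t+1) Σ x² - (t²+2) Σ xy)²`
with `α = (2t+1)² (2(t+2)² + (a-4)(2t+1))` and `β = -2(2t+1)(a+t+1)`, both nonnegative when
`a ≤ 4` and `-a-1 ≤ t < -1/2`.
-/

/-- `w_4 + a w_3 + b w_2 + c w_1`. -/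
def symQuartic (a b c x y z : ℝ) : ℝ :=
  (x^4+y^4+z^4) + a*(x^3*y+y^3*z+z^3*x+x*y^3+y*z^3+z*x^3) + b*(x^2*y^2+y^2*z^2+z^2*x^2)
    + c*(x*y*z*(x+y+z))

noncomputable def bBound (a t : ℝ) : ℝ :=
  -(t^4+(a+4)*t^3+(5*a+4)*t^2+4*(a+1)*t+2*a+2)/(2*t+1)

noncomputable def cBound (a t : ℝ) : ℝ :=
  (2*t^4+2*(a+1)*t^3+(2*a+4)*t^2+(3*a+4)*t-a)/(2*t+1)

lemma symQuartic_eq_add (a b b' c x y z : ℝ) :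
    symQuartic a b c x y z
      = symQuartic a b' c x y z + (b - b') * (x^2*y^2+y^2*z^2+z^2*x^2) := by
  unfold symQuartic; ring

lemma bBound_mul {a t : ℝ} (ht : 2*t+1 ≠ 0) :
    bBound a t * (2*t+1) = -(t^4+(a+4)*t^3+(5*a+4)*t^2+4*(a+1)*t+2*a+2) :=
  div_mul_cancel₀ _ ht

lemma cBound_mul {a t : ℝ} (ht : 2*t+1 ≠ 0) :
    cBound a t * (2*t+1) = 2*t^4+2*(a+1)*t^3+(2*a+4)*t^2+(3*a+4)*t-a :=
  div_mul_cancel₀ _ ht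

lemma symQuartic_bBound_cBound_t_one_one {a t : ℝ} (ht : 2*t+1 ≠ 0) :
    symQuartic a (bBound a t) (cBound a t) t 1 1 = 0 := by
  refine (mul_eq_zero.1 ?_).resolve_left ht
  unfold symQuartic
  linear_combination (2*t^2+1)*bBound_mul (a := a) ht + (t^2+2*t)*cBound_mul (a := a) ht

lemma symQuartic_bBound_cBound_sos {a t : ℝ} (ht : 2*t+1 ≠ 0) (x y z : ℝ) :
    6*(1-t)*(2*t+1)^2 * symQuartic a (bBound a t) (cBound a t) x y z
      = (2*t+1)^2*(2*(t+2)^2+(a-4)*(2*t+1))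
          * (((y-z)*(y+z-(t+1)*x))^2 + ((z-x)*(z+x-(t+1)*y))^2 + ((x-y)*(x+y-(t+1)*z))^2)
        + (-2*(2*t+1)*(a+t+1)) * ((2*t+1)*(x^2+y^2+z^2)-(t^2+2)*(x*y+y*z+z*x))^2 := by
  unfold symQuartic
  linear_combination (6*(2*t+1)*(1-t)*(x^2*y^2+y^2*z^2+z^2*x^2))*bBound_mul (a := a) ht
    + (6*(2*t+1)*(1-t)*(x*y*z*(x+y+z)))*cBound_mul (a := a) ht

lemma symQuartic_bBound_cBound_nonneg {a t : ℝ} (ha : a ≤ 4) (ht1 : -a-1 ≤ t) (ht2 : t < -1/2)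
    (x y z : ℝ) : 0 ≤ symQuartic a (bBound a t) (cBound a t) x y z := by
  have hneg : 2*t+1 < 0 := by linarith
  have hα : 0 ≤ 2*(t+2)^2+(a-4)*(2*t+1) := by
    nlinarith [mul_nonneg (sub_nonneg.2 ha) (neg_nonneg.2 hneg.le), sq_nonneg (t+2)]
  have hβ : 0 ≤ -2*(2*t+1)*(a+t+1) := by
    nlinarith [mul_nonneg (neg_nonneg.2 hneg.le) (by linarith : (0:ℝ) ≤ a+t+1)]
  have hK : 0 < 6*(1-t)*(2*t+1)^2 :=
    mul_pos (by linarith) (sq_pos_of_neg hneg)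
  refine nonneg_of_mul_nonneg_right ?_ hK
  rw [symQuartic_bBound_cBound_sos hneg.ne]
  positivity

theorem stmt_8_general (a t : ℝ) (ha2 : a ≤ 4)
    (ht1 : -a-1 ≤ t) (ht2 : t < -1/2)
    (bt ct : ℝ)
    (hbt : bt = -(t^4+(a+4)*t^3+(5*a+4)*t^2+4*(a+1)*t+2*a+2)/(2*t+1))
    (hct : ct = (2*t^4+2*(a+1)*t^3+(2*a+4)*t^2+(3*a+4)*t-a)/(2*t+1))
    (b : ℝ) :
    (∀ x y z : ℝ, 0 ≤ (x^4+y^4+z^4) + a*(x^3*y+y^3*z+z^3*x+x*y^3+y*z^3+z*x^3) + b*(x^2*y^2+y^2*z^2+z^2*x^2) + ct*(x*y*z*(x+y+z))) ↔ b ≥ bt := by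
  change bt = bBound a t at hbt
  change ct = cBound a t at hct
  subst hbt hct
  change (∀ x y z, 0 ≤ symQuartic a b (cBound a t) x y z) ↔ _
  simp only [symQuartic_eq_add a b (bBound a t)]
  constructor
  · intro h
    have h1 := h t 1 1
    rw [symQuartic_bBound_cBound_t_one_one (by linarith), zero_add] at h1
    exact sub_nonneg.1 (nonneg_of_mul_nonneg_left h1 (by positivity))
  · intro hb x y z
    exact add_nonneg (symQuartic_bBound_cBound_nonneg ha2 ht1 ht2 x y z)
      (mul_nonneg (sub_nonneg.2 hb) (by positivity))

theorem stmt_8 (a t : ℝ) (ha1 : -1/2 < a) (ha2 : a ≤ 4)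
    (ht1 : -a-1 ≤ t) (ht2 : t < -1/2)
    (bt ct : ℝ)
    (hbt : bt = -(t^4+(a+4)*t^3+(5*a+4)*t^2+4*(a+1)*t+2*a+2)/(2*t+1))
    (hct : ct = (2*t^4+2*(a+1)*t^3+(2*a+4)*t^2+(3*a+4)*t-a)/(2*t+1))
    (b : ℝ) :
    (∀ x y z : ℝ, 0 ≤ (x^4+y^4+z^4) + a*(x^3*y+y^3*z+z^3*x+x*y^3+y*z^3+z*x^3) + b*(x^2*y^2+y^2*z^2+z^2*x^2) + ct*(x*y*z*(x+y+z))) ↔ b ≥ bt :=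
  stmt_8_general a t ha2 ht1 ht2 bt ct hbt hct b
end

section
/- For all real x, y, z: x^4+y^4+z^4 + 2(x^3y+y^3z+z^3x+xy^3+yz^3+zx^3) + (5√5-7)/2 · (x^2y^2+y^2z^2+z^2x^2) + 4·xyz(x+y+z) ≥ 0, with equality when x=y=1 and z = -(1+√5)/2. -/
theorem stmt_9 :
    (∀ x y z : ℝ, 0 ≤ (x^4+y^4+z^4) + 2*(x^3*y+y^3*z+z^3*x+x*y^3+y*z^3+z*x^3) + ((5*Real.sqrt 5 - 7)/2)*(x^2*y^2+y^2*z^2+z^2*x^2) + 4*(x*y*z*(x+y+z))) ∧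
    (∀ x y z : ℝ, x = 1 → y = 1 → z = -(1+Real.sqrt 5)/2 →
      (x^4+y^4+z^4) + 2*(x^3*y+y^3*z+z^3*x+x*y^3+y*z^3+z*x^3) + ((5*Real.sqrt 5 - 7)/2)*(x^2*y^2+y^2*z^2+z^2*x^2) + 4*(x*y*z*(x+y+z)) = 0) := by
  have hs : Real.sqrt 5 ^ 2 = 5 := Real.sq_sqrt (by norm_num)
  have hsn : (0:ℝ) ≤ Real.sqrt 5 := Real.sqrt_nonneg 5
  set s := Real.sqrt 5 with hsdef
  have hs2 : (11:ℝ)/5 ≤ s := by nlinarith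
  have hs3 : s ≤ (29:ℝ)/12 := by nlinarith
  constructor
  · intro x y z
    have key : (x^4+y^4+z^4) + 2*(x^3*y+y^3*z+z^3*x+x*y^3+y*z^3+z*x^3) + ((5*s - 7)/2)*(x^2*y^2+y^2*z^2+z^2*x^2) + 4*(x*y*z*(x+y+z))
        = (x^2 + ((5*s-11)/2)*(y^2+z^2) + x*y + ((21-9*s)/2)*(y*z) + z*x)^2
        + ((55*s-121)/2) * (y^2 + ((13-5*s)/22)*z^2 + ((9+5*s)/22)*(x*y) + ((7*s-5)/11)*(y*z) + ((1+3*s)/22)*(z*x))^2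
        + ((145-60*s)/11) * (z^2 + (1/2 - s/10)*(x*y) + (2*s/5)*(y*z+z*x))^2 := by
      linear_combination ((375/88)*z^4 + (-125/88)*z^4*s + (-17)*y*z^3 + (175/22)*y*z^3*s
        + (361/20)*y^2*z^2 + (-1129/110)*y^2*z^2*s + (-25/2)*y^3*z + (-25/4)*y^4
        + (-13/4)*x*z^3 + (75/44)*x*z^3*s + (-333/220)*x*y*z^2 + (-41/220)*x*y*z^2*s
        + (23/5)*x*y^2*z + (-923/110)*x*y^2*z*s + (-25/2)*x*y^3 + (-53/40)*x^2*z^2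
        + (159/440)*x^2*z^2*s + (67/20)*x^2*y*z + (-471/220)*x^2*y*z*s
        + (-1173/440)*x^2*y^2 + (-601/440)*x^2*y^2*s) * hs
    rw [key]
    have h1 : (0:ℝ) ≤ (55*s-121)/2 := by nlinarith
    have h2 : (0:ℝ) ≤ (145-60*s)/11 := by nlinarith
    have := sq_nonneg (x^2 + ((5*s-11)/2)*(y^2+z^2) + x*y + ((21-9*s)/2)*(y*z) + z*x)
    have := mul_nonneg h1 (sq_nonneg (y^2 + ((13-5*s)/22)*z^2 + ((9+5*s)/22)*(x*y) + ((7*s-5)/11)*(y*z) + ((1+3*s)/22)*(z*x)))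
    have := mul_nonneg h2 (sq_nonneg (z^2 + (1/2 - s/10)*(x*y) + (2*s/5)*(y*z+z*x)))
    linarith
  · intro x y z hx hy hz
    subst hx; subst hy; subst hz
    linear_combination (1/16 * s^2 + s + 15/16) * hs
end

section
/- For all real x, y, z and all a ∈ [0,6]: x^4+y^4+z^4 + a(x^3y+y^3z+z^3x+xy^3+yz^3+zx^3) + (2a-1)(x^2y^2+y^2z^2+z^2x^2) + 4a·xyz(x+y+z) ≥ 0. -/
theorem stmt_15 (a : ℝ) (ha1 : 0 ≤ a) (ha2 : a ≤ 6) (x y z : ℝ) :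
    0 ≤ (x^4+y^4+z^4) + a*(x^3*y+y^3*z+z^3*x+x*y^3+y*z^3+z*x^3) + (2*a-1)*(x^2*y^2+y^2*z^2+z^2*x^2) + 4*a*(x*y*z*(x+y+z)) := by
  nlinarith [mul_nonneg ha1 (sq_nonneg (x^2+y^2+z^2+3*(x*y+y*z+z*x))),
    mul_nonneg (sub_nonneg.2 ha2) (sq_nonneg (x^2-y^2)),
    mul_nonneg (sub_nonneg.2 ha2) (sq_nonneg (y^2-z^2)),
    mul_nonneg (sub_nonneg.2 ha2) (sq_nonneg (z^2-x^2)),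
    sq_nonneg (x^2-y^2), sq_nonneg (y^2-z^2), sq_nonneg (z^2-x^2)]
end

section
/- For all real x, y, z and all a ∈ [-4,-1]: x^4+y^4+z^4 + a(x^3y+y^3z+z^3x+xy^3+yz^3+zx^3) - 2(a+1)(x^2y^2+y^2z^2+z^2x^2) - a·xyz(x+y+z) ≥ 0. -/
theorem stmt_16 (a : ℝ) (ha1 : -4 ≤ a) (ha2 : a ≤ -1) (x y z : ℝ) :
    0 ≤ (x^4+y^4+z^4) + a*(x^3*y+y^3*z+z^3*x+x*y^3+y*z^3+z*x^3) - 2*(a+1)*(x^2*y^2+y^2*z^2+z^2*x^2) - a*(x*y*z*(x+y+z)) := by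
  nlinarith [mul_nonneg (by linarith : (0:ℝ) ≤ a+4) (sq_nonneg ((x+y-z)*(x-y))),
    mul_nonneg (by linarith : (0:ℝ) ≤ a+4) (sq_nonneg ((y+z-x)*(y-z))),
    mul_nonneg (by linarith : (0:ℝ) ≤ a+4) (sq_nonneg ((z+x-y)*(z-x))),
    mul_nonneg (by linarith : (0:ℝ) ≤ -1-a) (sq_nonneg (x^2+y^2+z^2-2*x*y-2*y*z-2*z*x))]
end

section
/- Let a, b, c be real constants and suppose x^4+y^4+z^4 + a(x^3y+y^3z+z^3x+xy^3+yz^3+zx^3) + b(x^2y^2+y^2z^2+z^2x^2) + c·xyz(x+y+z) ≥ 0 holds for all nonnegative real x, y, z. Then c ≥ -2a-b-1, and moreover b ≥ a^2/4+2 if a ≤ -4, while b ≥ -2(a+1) if a ≥ -4. -/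
theorem stmt_17 (a b c : ℝ)
    (h : ∀ x y z : ℝ, 0 ≤ x → 0 ≤ y → 0 ≤ z →
      0 ≤ (x^4+y^4+z^4) + a*(x^3*y+y^3*z+z^3*x+x*y^3+y*z^3+z*x^3) + b*(x^2*y^2+y^2*z^2+z^2*x^2) + c*(x*y*z*(x+y+z))) :
    c ≥ -2*a - b - 1 ∧ (a ≤ -4 → b ≥ a^2/4 + 2) ∧ (a ≥ -4 → b ≥ -2*(a+1)) := by
  refine ⟨?_, ?_, ?_⟩
  · have h1 := h 1 1 1 (by norm_num) (by norm_num) (by norm_num)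
    nlinarith [h1]
  · intro ha
    set t : ℝ := -a/2 with ht
    have ht2 : (2:ℝ) ≤ t := by rw [ht]; linarith
    have hnn : (0:ℝ) ≤ t^2 - 4 := by nlinarith
    set s : ℝ := Real.sqrt (t^2 - 4) with hs
    have hs0 : 0 ≤ s := Real.sqrt_nonneg _
    have hs2 : s^2 = t^2 - 4 := Real.sq_sqrt hnn
    set x : ℝ := (t + s)/2 with hx
    have hxpos : 0 < x := by positivity
    have hquad : x^2 - t*x + 1 = 0 := by
      have h2 : x^2 = (t^2 + 2*t*s + s^2)/4 := by rw [hx]; ring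
      rw [hs2] at h2
      rw [h2, hx]; ring
    have hinst := h x 1 0 (le_of_lt hxpos) (by norm_num) (by norm_num)
    have hax : a = -2*t := by rw [ht]; ring
    have key : x^4 + 1 + a*(x^3 + x) + b*x^2 = x^2*(b - t^2 - 2) := by
      rw [hax]; linear_combination (x^2 - t*x + 1) * hquad
    have hgoal : a^2/4 + 2 = t^2 + 2 := by rw [ht]; ring
    rw [hgoal]
    by_contra h'
    push_neg at h'
    have hneg : x^2*(b-t^2-2) < 0 := mul_neg_of_pos_of_neg (by positivity) (by linarith)
    nlinarith [hinst, key, hneg]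
  · intro ha
    have h1 := h 1 1 0 (by norm_num) (by norm_num) (by norm_num)
    nlinarith [h1]
end

section
/- Let a ≥ -1, b ≥ -2(a+1), and c ≥ -2a-b-1 be real constants. Then for all nonnegative real x, y, z: x^4+y^4+z^4 + a(x^3y+y^3z+z^3x+xy^3+yz^3+zx^3) + b(x^2y^2+y^2z^2+z^2x^2) + c·xyz(x+y+z) ≥ 0. -/
lemma schur_aux (x y z : ℝ) (hz : 0 ≤ z) (hzy : z ≤ y) (hyx : y ≤ x) :
    0 ≤ (x^4+y^4+z^4) + x*y*z*(x+y+z) - (x^3*y+y^3*z+z^3*x+x*y^3+y*z^3+z*x^3) := by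
  nlinarith [mul_nonneg (mul_nonneg (sub_nonneg.2 hyx) (sub_nonneg.2 hzy)) (sq_nonneg x),
    mul_nonneg (mul_nonneg (sub_nonneg.2 hyx) (sub_nonneg.2 hzy)) (sq_nonneg y),
    mul_nonneg (mul_nonneg (sub_nonneg.2 hyx) (sub_nonneg.2 hzy)) (sq_nonneg z),
    mul_nonneg (sq_nonneg (x - y)) (sq_nonneg x),
    mul_nonneg (mul_nonneg (mul_nonneg (sub_nonneg.2 hyx) (sub_nonneg.2 hzy)) hz) hz,
    mul_nonneg (mul_nonneg (mul_nonneg (sub_nonneg.2 hyx) (sub_nonneg.2 hzy))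
      (sub_nonneg.2 (hzy.trans hyx))) hz,
    mul_nonneg (mul_nonneg (sub_nonneg.2 hyx) (sub_nonneg.2 hzy))
      (mul_nonneg (sub_nonneg.2 hyx) (add_nonneg (hz.trans hzy) (hz.trans (hzy.trans hyx)))),
    mul_nonneg (mul_nonneg (mul_nonneg (sub_nonneg.2 (hzy.trans hyx)) (sub_nonneg.2 hzy)) hz) hz]

theorem stmt_18 (a b c : ℝ) (ha : a ≥ -1) (hb : b ≥ -2*(a+1)) (hc : c ≥ -2*a-b-1)
    (x y z : ℝ) (hx : 0 ≤ x) (hy : 0 ≤ y) (hz : 0 ≤ z) :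
    0 ≤ (x^4+y^4+z^4) + a*(x^3*y+y^3*z+z^3*x+x*y^3+y*z^3+z*x^3) + b*(x^2*y^2+y^2*z^2+z^2*x^2) + c*(x*y*z*(x+y+z)) := by
  have hschur : 0 ≤ (x^4+y^4+z^4) + x*y*z*(x+y+z) - (x^3*y+y^3*z+z^3*x+x*y^3+y*z^3+z*x^3) := by
    rcases le_total x y with h1 | h1 <;> rcases le_total y z with h2 | h2 <;>
      rcases le_total x z with h3 | h3
    · have := schur_aux z y x hx h1 h2; nlinarith [this]
    · have := schur_aux z y x hx h1 h2; nlinarith [this]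
    · have := schur_aux y z x hx h3 h2; nlinarith [this]
    · have := schur_aux y x z hz h3 h1; nlinarith [this]
    · have := schur_aux z x y hy h1 h3; nlinarith [this]
    · have := schur_aux x z y hy h2 h3; nlinarith [this]
    · have := schur_aux x y z hz h2 h1; nlinarith [this]
    · have := schur_aux x y z hz h2 h1; nlinarith [this]
  have h32 : 0 ≤ (x^3*y+y^3*z+z^3*x+x*y^3+y*z^3+z*x^3) - 2*(x^2*y^2+y^2*z^2+z^2*x^2) := by
    nlinarith [mul_nonneg (mul_nonneg hx hy) (sq_nonneg (x-y)), mul_nonneg (mul_nonneg hy hz) (sq_nonneg (y-z)), mul_nonneg (mul_nonneg hz hx) (sq_nonneg (z-x))]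
  have h21 : 0 ≤ (x^2*y^2+y^2*z^2+z^2*x^2) - x*y*z*(x+y+z) := by
    nlinarith [sq_nonneg (x*y - y*z), sq_nonneg (y*z - z*x), sq_nonneg (z*x - x*y)]
  have h1 : 0 ≤ x*y*z*(x+y+z) :=
    mul_nonneg (mul_nonneg (mul_nonneg hx hy) hz) (by positivity)
  nlinarith [mul_nonneg (by linarith : (0:ℝ) ≤ a+1) h32,
    mul_nonneg (by linarith : (0:ℝ) ≤ 2*a+2+b) h21,
    mul_nonneg (by linarith : (0:ℝ) ≤ 2*a+b+c+1) h1, hschur]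
end
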